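/- Let λ ∈ (0,1) and θ ∈ (0,∞) with θ ≠ 1/2 and θ ≠ 1. Let c be the unique zero of f(c) = (c/((2θ−1+2cθ)(2−2θ−c(2θ−1))))^((1−θ)/(θ−1/2)) − (2θ−1+2cθ)²/(1−λ) in I(θ), set s̄ = (c/((2θ−1+2cθ)(2−2θ−c(2θ−1))))^(1/(2θ−1)), and define g(s) = (−cs + (2θ−1+2cθ)s^(2θ))/(s − (2−2θ−c(2θ−1))s^(2θ)). Then g satisfies the smooth-pasting boundary conditions g(1) = 1, g'(1) = 1, g(s̄) = (1−λ)s̄, and g'(s̄) = 1−λ. -/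

import Mathlib

open Real

/-- The interval `I(θ)` in which the root `c` of `f` is located. -/
noncomputable def noTradeInterval (θ : ℝ) : Set ℝ :=
  if θ < 1/2 then Set.Ioi ((1 - θ)/θ)
  else if θ < 1 then Set.Ioo ((1 - θ)/θ) ((1 - θ)/(θ - 1/2))
  else Set.Ioo ((1 - θ)/θ) 0

/-!
Write `a = 2θ - 1 + 2cθ`, `b = 2 - 2θ - c(2θ - 1)` and `x = s^(2θ-1)`. Then
`g(s) = (-c + a x) / (1 - b x)` and `g'(s) = (2θ - 1)(a - cb) x / (s (1 - b x)²)`.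
The identities `a + b = 1 + c` and `(2θ - 1)(a - cb) = (1 - b)²` give `g(1) = g'(1) = 1`.
At `s̄` we have `x = c / (ab)`, whence `g(s̄) = ca / b` and `g'(s̄) = g(s̄) / s̄`;
and `f(c) = 0` says exactly that `(1 - λ) s̄ = ca / b`.
-/

noncomputable def shadowRatio (a b c p s : ℝ) : ℝ :=
  (-c * s + a * s ^ p) / (s - b * s ^ p)

section ShadowRatio

variable {a b c p s : ℝ}

theorem rpow_eq_mul_rpow_sub_one (hs : 0 < s) : s ^ p = s * s ^ (p - 1) := by
  rw [Real.rpow_sub_one hs.ne', mul_div_cancel₀ _ hs.ne']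

theorem shadowRatio_eq (hs : 0 < s) :
    shadowRatio a b c p s = (-c + a * s ^ (p - 1)) / (1 - b * s ^ (p - 1)) := by
  rw [shadowRatio, rpow_eq_mul_rpow_sub_one hs,
    show -c * s + a * (s * s ^ (p - 1)) = s * (-c + a * s ^ (p - 1)) by ring,
    show s - b * (s * s ^ (p - 1)) = s * (1 - b * s ^ (p - 1)) by ring,
    mul_div_mul_left _ _ hs.ne']

theorem hasDerivAt_shadowRatio (hs : 0 < s) (hD : 1 - b * s ^ (p - 1) ≠ 0) :
    HasDerivAt (shadowRatio a b c p)
      ((p - 1) * (a - c * b) * s ^ (p - 1) / (s * (1 - b * s ^ (p - 1)) ^ 2)) s := by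
  have hsp := rpow_eq_mul_rpow_sub_one (p := p) hs
  have hpow : HasDerivAt (fun t : ℝ => t ^ p) (p * s ^ (p - 1)) s :=
    Real.hasDerivAt_rpow_const (Or.inl hs.ne')
  have hnum := ((hasDerivAt_id' s).const_mul (-c)).fun_add (hpow.const_mul a)
  have hden := (hasDerivAt_id' s).fun_sub (hpow.const_mul b)
  have hden_ne : s - b * s ^ p ≠ 0 := by
    rw [hsp, show s - b * (s * s ^ (p - 1)) = s * (1 - b * s ^ (p - 1)) by ring]
    exact mul_ne_zero hs.ne' hD
  refine (hnum.fun_div hden hden_ne).congr_deriv ?_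
  rw [hsp]
  field_simp
  ring

theorem shadowRatio_one (hab : a + b = 1 + c) (hb : 1 - b ≠ 0) : shadowRatio a b c p 1 = 1 := by
  rw [shadowRatio_eq one_pos, Real.one_rpow, mul_one, mul_one, div_eq_one_iff_eq hb]
  linarith

theorem hasDerivAt_shadowRatio_one (hb : 1 - b ≠ 0) (hp : (p - 1) * (a - c * b) = (1 - b) ^ 2) :
    HasDerivAt (shadowRatio a b c p) 1 1 := by
  convert hasDerivAt_shadowRatio (a := a) (c := c) one_pos (by rwa [Real.one_rpow, mul_one])
    using 1
  rw [Real.one_rpow, mul_one, mul_one, one_mul, hp, div_self (pow_ne_zero 2 hb)]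

end ShadowRatio

theorem one_sub_mul_div_mul_eq {a b c : ℝ} (hab : a + b = 1 + c) (ha : a ≠ 0) (hb : b ≠ 0) :
    1 - b * (c / (a * b)) = (1 - b) / a := by
  field_simp
  linarith

section PastingPoint

variable {a b c p s : ℝ} (hab : a + b = 1 + c) (hb1 : 1 - b ≠ 0) (ha : a ≠ 0) (hb : b ≠ 0)
  (hs : 0 < s) (hx : s ^ (p - 1) = c / (a * b))
include hab hb1 ha hb hs hx

theorem shadowRatio_eq_of_rpow_eq : shadowRatio a b c p s = c * a / b := by
  rw [shadowRatio_eq hs, hx, one_sub_mul_div_mul_eq hab ha hb]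
  field_simp
  ring

theorem hasDerivAt_shadowRatio_of_rpow_eq (hp : (p - 1) * (a - c * b) = (1 - b) ^ 2) :
    HasDerivAt (shadowRatio a b c p) (c * a / (b * s)) s := by
  have hD : 1 - b * s ^ (p - 1) = (1 - b) / a := hx ▸ one_sub_mul_div_mul_eq hab ha hb
  convert hasDerivAt_shadowRatio hs (hD ▸ div_ne_zero hb1 ha) using 1
  rw [hD, hp, hx]
  field_simp

end PastingPoint

section NoTradeInterval

variable {θ c : ℝ}

theorem one_lt_mul_one_add_of_mem_noTradeInterval (hθ : 0 < θ) (hc : c ∈ noTradeInterval θ) :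
    1 < θ * (1 + c) := by
  have hlow : (1 - θ) / θ < c := by
    unfold noTradeInterval at hc
    split_ifs at hc
    exacts [hc, hc.1, hc.1]
  rw [div_lt_iff₀ hθ] at hlow
  linarith

theorem two_mul_sub_one_ne_zero_of_mem_noTradeInterval (hc : c ∈ noTradeInterval θ) :
    2 * θ - 1 ≠ 0 := by
  intro h
  -- At `θ = 1/2` the middle branch is `Ioo 1 ((1/2) / 0) = Ioo 1 0`, which is empty.
  obtain rfl : θ = 1 / 2 := by linarith
  norm_num [noTradeInterval] at hc

theorem div_pos_of_mem_noTradeInterval (hθ : 0 < θ) (hc : c ∈ noTradeInterval θ) :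
    0 < c / ((2 * θ - 1 + 2 * c * θ) * (2 - 2 * θ - c * (2 * θ - 1))) := by
  have hθc := one_lt_mul_one_add_of_mem_noTradeInterval hθ hc
  have hθ2 := two_mul_sub_one_ne_zero_of_mem_noTradeInterval hc
  have ha : 0 < 2 * θ - 1 + 2 * c * θ := by linarith
  unfold noTradeInterval at hc
  split_ifs at hc with hθ_half hθ_one
  · have hc0 : 0 < c := lt_trans (div_pos (by linarith) hθ) hc
    exact div_pos hc0 (mul_pos ha (by nlinarith))
  · have hθ_half' : 0 < θ - 1 / 2 := by
      rw [not_lt] at hθ_half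
      exact lt_of_le_of_ne (by linarith) (fun h => hθ2 (by linarith))
    have hc0 : 0 < c := lt_trans (div_pos (by linarith) hθ) hc.1
    have hup := (lt_div_iff₀ hθ_half').mp hc.2
    exact div_pos hc0 (mul_pos ha (by linarith))
  · exact div_pos_of_neg_of_neg hc.2 (mul_neg_of_pos_of_neg ha (by nlinarith))

end NoTradeInterval

theorem growth_optimal_g_smooth_pasting_general
    (lam θ c sbar : ℝ) (g : ℝ → ℝ)
    (hlam : lam ∈ Set.Ioo (0:ℝ) 1) (hθ : 0 < θ)
    (hcI : c ∈ noTradeInterval θ)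
    (hfc : (c / ((2*θ - 1 + 2*c*θ) * (2 - 2*θ - c*(2*θ - 1)))) ^ ((1 - θ)/(θ - 1/2))
        - (2*θ - 1 + 2*c*θ)^2 / (1 - lam) = 0)
    (hsbar : sbar = (c / ((2*θ - 1 + 2*c*θ) * (2 - 2*θ - c*(2*θ - 1)))) ^ (1/(2*θ - 1)))
    (hg : ∀ s : ℝ, g s = (-c*s + (2*θ - 1 + 2*c*θ) * s ^ (2*θ))
        / (s - (2 - 2*θ - c*(2*θ - 1)) * s ^ (2*θ))) :
    g 1 = 1 ∧ deriv g 1 = 1 ∧ g sbar = (1 - lam) * sbar ∧ deriv g sbar = 1 - lam := by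
  have hθc := one_lt_mul_one_add_of_mem_noTradeInterval hθ hcI
  have hθ2 := two_mul_sub_one_ne_zero_of_mem_noTradeInterval hcI
  have hx := div_pos_of_mem_noTradeInterval hθ hcI
  have ha : 0 < 2 * θ - 1 + 2 * c * θ := by linarith
  obtain rfl : g = shadowRatio _ _ c (2 * θ) := funext hg
  set a := 2*θ - 1 + 2*c*θ
  set b := 2 - 2*θ - c*(2*θ - 1)
  have hab : a + b = 1 + c := by ring
  have hp : (2 * θ - 1) * (a - c * b) = (1 - b) ^ 2 := by ring
  have hb1 : 1 - b ≠ 0 := by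
    rw [show 1 - b = (2 * θ - 1) * (1 + c) by ring]
    exact mul_ne_zero hθ2 (by nlinarith)
  have hb : b ≠ 0 := by rintro hb; simp [hb] at hx
  have hsbar_pos : 0 < sbar := hsbar ▸ Real.rpow_pos_of_pos hx _
  have hsbar_pow : sbar ^ (2 * θ - 1) = c / (a * b) := by
    rw [hsbar, one_div, Real.rpow_inv_rpow hx.le hθ2]
  have hpaste : (1 - lam) * sbar = c * a / b := by
    have hexp : (1 - θ) / (θ - 1 / 2) = 1 / (2 * θ - 1) - 1 := by
      rw [show θ - 1 / 2 = (2 * θ - 1) / 2 by ring, div_div_eq_mul_div, eq_sub_iff_add_eq,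
        div_add_one hθ2]
      ring
    rw [hexp, Real.rpow_sub_one hx.ne', ← hsbar, sub_eq_zero,
      div_eq_div_iff hx.ne' (by linarith [hlam.2])] at hfc
    rw [mul_comm, hfc]
    field_simp
  refine ⟨shadowRatio_one hab hb1, (hasDerivAt_shadowRatio_one hb1 hp).deriv, ?_, ?_⟩
  · rw [shadowRatio_eq_of_rpow_eq hab hb1 ha.ne' hb hsbar_pos hsbar_pow, hpaste]
  · rw [(hasDerivAt_shadowRatio_of_rpow_eq hab hb1 ha.ne' hb hsbar_pos hsbar_pow hp).deriv,
      ← div_div, ← hpaste, mul_div_cancel_right₀ _ hsbar_pos.ne']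

theorem growth_optimal_g_smooth_pasting
    (lam θ c sbar : ℝ) (g : ℝ → ℝ)
    (hlam : lam ∈ Set.Ioo (0:ℝ) 1) (hθ : 0 < θ) (hθhalf : θ ≠ 1/2) (hθone : θ ≠ 1)
    (hcI : c ∈ noTradeInterval θ)
    (hfc : (c / ((2*θ - 1 + 2*c*θ) * (2 - 2*θ - c*(2*θ - 1)))) ^ ((1 - θ)/(θ - 1/2))
        - (2*θ - 1 + 2*c*θ)^2 / (1 - lam) = 0)
    (hsbar : sbar = (c / ((2*θ - 1 + 2*c*θ) * (2 - 2*θ - c*(2*θ - 1)))) ^ (1/(2*θ - 1)))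
    (hg : ∀ s : ℝ, g s = (-c*s + (2*θ - 1 + 2*c*θ) * s ^ (2*θ))
        / (s - (2 - 2*θ - c*(2*θ - 1)) * s ^ (2*θ))) :
    g 1 = 1 ∧ deriv g 1 = 1 ∧ g sbar = (1 - lam) * sbar ∧ deriv g sbar = 1 - lam :=
  growth_optimal_g_smooth_pasting_general lam θ c sbar g hlam hθ hcI hfc hsbar hg
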